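/- Let 0 < α < 1, let S₀ ≥ 0 and let m ≤ M be real numbers. Suppose Θ̲ ≤ Θ̄ are real numbers satisfying Θ̄ ≤ max(S₀, M − α·Θ̲) and Θ̲ ≥ min(−S₀, m − α·Θ̄). Then max(Θ̄, −Θ̲) ≤ S₀ + (2/(1−α²))·max(|M|, |m|). -/

import Mathlib

/-! Put `X = max Θ̄ (-Θ̲)` and `K = max |M| |m|`. Both one-sided bounds, being symmetric under
`Θ ↦ -Θ`, give `X ≤ max S₀ (K + α X)`; as `α < 1` this fixed-point inequality forces
`X ≤ max S₀ (K / (1 - α))`, and `1 / (1 - α) = (1 + α) / (1 - α²) ≤ 2 / (1 - α²)`. -/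

lemma max_le_max_add_mul_max {α S K a b : ℝ} (hα : 0 ≤ α)
    (ha : a ≤ max S (K + α * b)) (hb : b ≤ max S (K + α * a)) :
    max a b ≤ max S (K + α * max a b) := by
  have hmono : ∀ c, c ≤ max a b → max S (K + α * c) ≤ max S (K + α * max a b) :=
    fun _ _ => by gcongr
  exact max_le (ha.trans (hmono b (le_max_right a b))) (hb.trans (hmono a (le_max_left a b)))

lemma le_max_div_one_sub_of_le_max_add_mul {α S K x : ℝ} (hα : α < 1)
    (h : x ≤ max S (K + α * x)) : x ≤ max S (K / (1 - α)) := by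
  rcases le_max_iff.mp h with hS | hK
  · exact le_max_of_le_left hS
  · exact le_max_of_le_right ((le_div_iff₀ (by linarith)).mpr (by linarith))

lemma div_one_sub_le_two_div_one_sub_sq_mul {α K : ℝ} (hα0 : 0 ≤ α) (hα1 : α < 1)
    (hK : 0 ≤ K) : K / (1 - α) ≤ 2 / (1 - α ^ 2) * K := by
  have hpos : 0 < 1 - α := by linarith
  rw [show 1 - α ^ 2 = (1 - α) * (1 + α) by ring, div_mul_eq_mul_div,
    div_le_div_iff₀ hpos (by positivity)]
  nlinarith [mul_nonneg hK hpos.le]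

theorem uniform_temperature_bound_general
    (α S₀ m M Θlo Θhi : ℝ)
    (hα0 : 0 < α) (hα1 : α < 1) (hS₀ : 0 ≤ S₀)
    (hhi : Θhi ≤ max S₀ (M - α * Θlo))
    (hlo : Θlo ≥ min (-S₀) (m - α * Θhi)) :
    max Θhi (-Θlo) ≤ S₀ + (2 / (1 - α ^ 2)) * max |M| |m| := by
  set K := max |M| |m|
  have hK : 0 ≤ K := (abs_nonneg M).trans (le_max_left _ _)
  have hMK : M ≤ K := (le_abs_self M).trans (le_max_left _ _)
  have hmK : -m ≤ K := (neg_le_abs m).trans (le_max_right _ _)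
  have hhi' : Θhi ≤ max S₀ (K + α * -Θlo) :=
    hhi.trans (max_le_max_left S₀ (by linarith))
  have hlo' : -Θlo ≤ max S₀ (K + α * Θhi) := by
    refine (neg_le_neg hlo).trans ?_
    rw [← max_neg_neg, neg_neg]
    exact max_le_max_left S₀ (by linarith)
  calc max Θhi (-Θlo) ≤ max S₀ (K / (1 - α)) :=
        le_max_div_one_sub_of_le_max_add_mul hα1 (max_le_max_add_mul_max hα0.le hhi' hlo')
    _ ≤ S₀ + 2 / (1 - α ^ 2) * K := by
        have hbound := div_one_sub_le_two_div_one_sub_sq_mul hα0.le hα1 hK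
        have hnonneg : 0 ≤ K / (1 - α) := div_nonneg hK (by linarith)
        exact max_le (by linarith) (by linarith)

/-- Core of the uniform temperature bound (Theorem 3.1): if `0 < α < 1`, `S₀ ≥ 0`,
`m ≤ M`, and the numbers `Θ̲ ≤ Θ̄` satisfy `Θ̄ ≤ max(S₀, M − α·Θ̲)` and
`Θ̲ ≥ min(−S₀, m − α·Θ̄)`, then `max(Θ̄, −Θ̲) ≤ S₀ + (2/(1−α²))·max(|M|, |m|)`. -/
theorem uniform_temperature_bound
    (α S₀ m M Θlo Θhi : ℝ)
    (hα0 : 0 < α) (hα1 : α < 1) (hS₀ : 0 ≤ S₀) (hmM : m ≤ M)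
    (hΘ : Θlo ≤ Θhi)
    (hhi : Θhi ≤ max S₀ (M - α * Θlo))
    (hlo : Θlo ≥ min (-S₀) (m - α * Θhi)) :
    max Θhi (-Θlo) ≤ S₀ + (2 / (1 - α ^ 2)) * max |M| |m| :=
  uniform_temperature_bound_general α S₀ m M Θlo Θhi hα0 hα1 hS₀ hhi hlo
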